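/- arXiv:2107.00271 — 3 statements merged into one kernel-verified Lean document; each statement's English description precedes it below -/
import Mathlib

section
/- For distinct transactions 1, 2 and distinct variables x, y, the history h2 = [wr_1(x), wr_1(y), rd_2(x), cmt_1, wr_2(y), cmt_2] is not opaque: there is no sequential history strictly equivalent to h2. (In h2, rd_2(x) conflicts with cmt_1 and cmt_1 conflicts with cmt_2, so any strictly equivalent sequential history would have to order transaction 1 before transaction 2 and transaction 2 before transaction 1.) -/
/-- Statements of the conflict-based setting: reads, writes (without values),
commits and aborts, each tagged with a transaction identifier (a positive natural). -/
inductive Stmt : Type where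
  | rd (t : ℕ+) (x : ℕ)
  | wr (t : ℕ+) (x : ℕ)
  | cmt (t : ℕ+)
  | abrt (t : ℕ+)
  deriving DecidableEq

/-- The transaction identifier of a statement. -/
def Stmt.txn : Stmt → ℕ+
  | .rd t _ => t
  | .wr t _ => t
  | .cmt t => t
  | .abrt t => t

/-- The variable mentioned by a statement, if any. -/
def Stmt.var? : Stmt → Option ℕ
  | .rd _ x => some x
  | .wr _ x => some x
  | _ => none

/-- Projection of a history onto a transaction. -/
def proj (h : List Stmt) (t : ℕ+) : List Stmt :=
  h.filter (fun s => s.txn = t)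

/-- Transaction `t` occurs in `h`. -/
def occurs (h : List Stmt) (t : ℕ+) : Prop := proj h t ≠ []

/-- Transaction `t` is committing in `h`. -/
def committing (h : List Stmt) (t : ℕ+) : Prop :=
  (proj h t).getLast? = some (Stmt.cmt t)

/-- Transaction `t` is aborting in `h`. -/
def aborting (h : List Stmt) (t : ℕ+) : Prop :=
  (proj h t).getLast? = some (Stmt.abrt t)

/-- Transaction `t` is finished in `h`. -/
def finished (h : List Stmt) (t : ℕ+) : Prop :=
  committing h t ∨ aborting h t

/-- Transaction `t` is live in `h`: it occurs but is not finished. -/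
def live (h : List Stmt) (t : ℕ+) : Prop := occurs h t ∧ ¬ finished h t

/-- `t1 <_h t2`: both occur and every statement of `t1` occurs strictly before
every statement of `t2` (equivalently, the last statement of `t1` is before the
first statement of `t2`). -/
def precedes (h : List Stmt) (t1 t2 : ℕ+) : Prop :=
  occurs h t1 ∧ occurs h t2 ∧
  ∀ (i j : ℕ) (s1 s2 : Stmt), h[i]? = some s1 → h[j]? = some s2 →
    s1.txn = t1 → s2.txn = t2 → i < j

/-- A history is sequential if any two distinct occurring transactions are
comparable under `<_h`. -/
def sequential (h : List Stmt) : Prop :=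
  ∀ t1 t2, t1 ≠ t2 → occurs h t1 → occurs h t2 →
    precedes h t1 t2 ∨ precedes h t2 t1

/-- Transaction `t` writes to variable `x` in `h`. -/
def writes (h : List Stmt) (t : ℕ+) (x : ℕ) : Prop := Stmt.wr t x ∈ h

/-- The occurrence at position `i` in `h` is a global read `rd_t(x)`:
no `wr_t(x)` occurs before it. -/
def globalRead (h : List Stmt) (i : ℕ) (t : ℕ+) (x : ℕ) : Prop :=
  h[i]? = some (Stmt.rd t x) ∧ ∀ j, j < i → h[j]? ≠ some (Stmt.wr t x)

/-- The statement occurrences at positions `i` and `j` of `h` (belonging to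
distinct transactions) are in conflict. -/
def conflict (h : List Stmt) (i j : ℕ) : Prop :=
  ∃ t1 t2, t1 ≠ t2 ∧
    ((∃ x, globalRead h i t1 x ∧ h[j]? = some (Stmt.cmt t2) ∧ writes h t2 x) ∨
     (∃ x, globalRead h j t1 x ∧ h[i]? = some (Stmt.cmt t2) ∧ writes h t2 x) ∨
     (h[i]? = some (Stmt.cmt t1) ∧ h[j]? = some (Stmt.cmt t2) ∧
      ∃ x, writes h t1 x ∧ writes h t2 x))

/-- Position `i` of `h` and position `i'` of `h'` carry the same statement `s`,
and it is in both cases the same (`k`-th) occurrence of `s`. -/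
def corresponds (h h' : List Stmt) (i i' : ℕ) : Prop :=
  ∃ s, h[i]? = some s ∧ h'[i']? = some s ∧
    (h.take i).count s = (h'.take i').count s

/-- `h'` is strictly equivalent to `h`: it is a rearrangement with the same
per-transaction projections, preserving the real-time order of finished
transactions and the relative order of conflicting statement occurrences. -/
def strictEquiv (h h' : List Stmt) : Prop :=
  h.Perm h' ∧
  (∀ t, proj h t = proj h' t) ∧
  (∀ t1 t2, t1 ≠ t2 → precedes h t1 t2 → finished h t1 → precedes h' t1 t2) ∧
  (∀ i j i' j', i < j → conflict h i j →
     corresponds h h' i i' → corresponds h h' j j' → i' < j')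

/-- A history is opaque if some sequential history is strictly equivalent to it. -/
def IsOpaque (h : List Stmt) : Prop :=
  ∃ h', sequential h' ∧ strictEquiv h h'

private lemma not_mem_take_indexOf {α} [DecidableEq α] (l : List α) (s : α) :
    s ∉ l.take (l.idxOf s) := by
  induction l with
  | nil => simp
  | cons a l ih =>
    by_cases h : a = s
    · subst h; simp
    · rw [List.idxOf_cons_ne _ h]
      simp [ih]; exact fun e => h e.symm

private lemma getElem?_indexOf' {α} [DecidableEq α] {l : List α} {s : α} (h : s ∈ l) :
    l[l.idxOf s]? = some s := by
  rw [List.getElem?_eq_getElem (List.idxOf_lt_length_iff.mpr h)]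
  simp [List.getElem_idxOf]

private lemma corr_of_indexOf {h h' : List Stmt} {i : ℕ} {s : Stmt}
    (hi : h[i]? = some s) (hc : (h.take i).count s = 0) (hmem : s ∈ h') :
    corresponds h h' i (h'.idxOf s) :=
  ⟨s, hi, getElem?_indexOf' hmem, by
    rw [hc]
    exact (List.count_eq_zero.mpr (not_mem_take_indexOf h' s)).symm⟩

/-- The history `h2 = [wr_1(x), wr_1(y), rd_2(x), cmt_1, wr_2(y), cmt_2]` (for
distinct variables `x`, `y`) is not opaque. -/
theorem h2_not_opaque (x y : ℕ) (hxy : x ≠ y) :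
    ¬ IsOpaque [Stmt.wr 1 x, Stmt.wr 1 y, Stmt.rd 2 x, Stmt.cmt 1,
                Stmt.wr 2 y, Stmt.cmt 2] := by
  rintro ⟨h', hseq, hperm, hproj, -, hconf⟩
  set h : List Stmt := [Stmt.wr 1 x, Stmt.wr 1 y, Stmt.rd 2 x, Stmt.cmt 1,
                Stmt.wr 2 y, Stmt.cmt 2] with hh
  have mem : ∀ s : Stmt, s ∈ h → s ∈ h' := fun s hs => hperm.subset hs
  -- key statements and their positions in h'
  have mrd : Stmt.rd 2 x ∈ h' := mem _ (by simp [hh])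
  have mc1 : Stmt.cmt 1 ∈ h' := mem _ (by simp [hh])
  have mc2 : Stmt.cmt 2 ∈ h' := mem _ (by simp [hh])
  -- correspondences
  have crd : corresponds h h' 2 (h'.idxOf (Stmt.rd 2 x)) :=
    corr_of_indexOf (by simp [hh]) (by simp [hh]) mrd
  have cc1 : corresponds h h' 3 (h'.idxOf (Stmt.cmt 1)) :=
    corr_of_indexOf (by simp [hh]) (by simp [hh]) mc1
  have cc2 : corresponds h h' 5 (h'.idxOf (Stmt.cmt 2)) :=
    corr_of_indexOf (by simp [hh]) (by simp [hh]) mc2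
  -- conflict rd_2(x) vs cmt_1
  have conf1 : conflict h 2 3 := by
    refine ⟨2, 1, by decide, Or.inl ⟨x, ⟨by simp [hh], ?_⟩, by simp [hh], by simp [writes, hh]⟩⟩
    intro j hj
    interval_cases j <;> simp [hh]
  -- conflict cmt_1 vs cmt_2 (both write y)
  have conf2 : conflict h 3 5 :=
    ⟨1, 2, by decide, Or.inr (Or.inr ⟨by simp [hh], by simp [hh],
      y, by simp [writes, hh], by simp [writes, hh]⟩)⟩
  have lt1 : h'.idxOf (Stmt.rd 2 x) < h'.idxOf (Stmt.cmt 1) :=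
    hconf 2 3 _ _ (by omega) conf1 crd cc1
  have lt2 : h'.idxOf (Stmt.cmt 1) < h'.idxOf (Stmt.cmt 2) :=
    hconf 3 5 _ _ (by omega) conf2 cc1 cc2
  -- occurrences in h'
  have occ1 : occurs h' 1 := by
    rw [occurs, ← hproj 1]; simp [proj, hh, Stmt.txn]
  have occ2 : occurs h' 2 := by
    rw [occurs, ← hproj 2]; simp [proj, hh, Stmt.txn]
  rcases hseq 1 2 (by decide) occ1 occ2 with ⟨-, -, hlt⟩ | ⟨-, -, hlt⟩
  · have := hlt _ _ _ _ (getElem?_indexOf' mc1) (getElem?_indexOf' mrd) rfl rfl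
    omega
  · have := hlt _ _ _ _ (getElem?_indexOf' mc2) (getElem?_indexOf' mc1) rfl rfl
    omega
end

section
/- For distinct transactions 1, 2 and distinct variables x, y, the history h = [rd_1(x), rd_2(x), rd_1(y), rd_2(y), wr_1(x), wr_2(y), cmt_1, cmt_2] (a history produced by the CoreDSTM algorithm) is not opaque: there is no sequential history strictly equivalent to h. (In h, rd_2(x) conflicts with cmt_1 and rd_1(y) conflicts with cmt_2, so a strictly equivalent sequential history would need transaction 2 to precede transaction 1 and transaction 1 to precede transaction 2.) -/
/-!
A read-commit conflict forces the global read before the commit in every strictly equivalent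
history. In `h`, `rd_2(x)` conflicts with `cmt_1` and `rd_1(y)` conflicts with `cmt_2`, so a
strictly equivalent history places a statement of transaction 2 before one of transaction 1 and
a statement of transaction 1 before one of transaction 2; hence neither transaction precedes the
other and the history is not sequential.
-/

lemma occurs_of_mem {h : List Stmt} {s : Stmt} (hs : s ∈ h) : occurs h s.txn :=
  List.ne_nil_of_mem (List.mem_filter.2 ⟨hs, decide_eq_true rfl⟩)

lemma not_precedes_of_getElem?_of_le {h : List Stmt} {i j : ℕ} {s u : Stmt}
    (hi : h[i]? = some s) (hj : h[j]? = some u) (hij : i ≤ j) :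
    ¬ precedes h u.txn s.txn :=
  fun ⟨_, _, hlt⟩ => (hlt j i u s hj hi rfl rfl).not_ge hij

lemma globalRead_of_not_mem_take {h : List Stmt} {i : ℕ} {t : ℕ+} {x : ℕ}
    (hi : h[i]? = some (.rd t x)) (hw : .wr t x ∉ h.take i) : globalRead h i t x := by
  refine ⟨hi, fun j hj hwj => hw (List.mem_of_getElem? (i := j) ?_)⟩
  rwa [List.getElem?_take, if_pos hj]

lemma corresponds_idxOf {h h' : List Stmt} {i : ℕ} {s : Stmt}
    (hi : h[i]? = some s) (hfirst : s ∉ h.take i) (hs : s ∈ h') :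
    corresponds h h' i (h'.idxOf s) := by
  refine ⟨s, hi, List.getElem?_idxOf hs, ?_⟩
  rw [List.count_eq_zero.2 hfirst, List.count_eq_zero.2 ((List.mem_take_iff_idxOf_lt hs).not.2
    (lt_irrefl _))]

namespace strictEquiv

variable {h h' : List Stmt}

lemma idxOf_rd_lt_idxOf_cmt (he : strictEquiv h h') {i j : ℕ} {t₁ t₂ : ℕ+} {x : ℕ}
    (ht : t₁ ≠ t₂) (hij : i < j) (hrd : h[i]? = some (.rd t₁ x)) (hcmt : h[j]? = some (.cmt t₂))
    (hrd_first : .rd t₁ x ∉ h.take i) (hcmt_first : .cmt t₂ ∉ h.take j)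
    (hglobal : .wr t₁ x ∉ h.take i) (hwrites : writes h t₂ x) :
    h'.idxOf (.rd t₁ x) < h'.idxOf (.cmt t₂) := by
  have hconflict : conflict h i j :=
    ⟨t₁, t₂, ht, .inl ⟨x, globalRead_of_not_mem_take hrd hglobal, hcmt, hwrites⟩⟩
  exact he.2.2.2 i j _ _ hij hconflict
    (corresponds_idxOf hrd hrd_first (he.1.mem_iff.1 (List.mem_of_getElem? hrd)))
    (corresponds_idxOf hcmt hcmt_first (he.1.mem_iff.1 (List.mem_of_getElem? hcmt)))

end strictEquiv

/-- The CoreDSTM history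
`h = [rd_1(x), rd_2(x), rd_1(y), rd_2(y), wr_1(x), wr_2(y), cmt_1, cmt_2]`
(for distinct variables `x`, `y`) is not opaque. -/
theorem coreDSTM_history_not_opaque (x y : ℕ) (hxy : x ≠ y) :
    ¬ IsOpaque [Stmt.rd 1 x, Stmt.rd 2 x, Stmt.rd 1 y, Stmt.rd 2 y,
                Stmt.wr 1 x, Stmt.wr 2 y, Stmt.cmt 1, Stmt.cmt 2] := by
  rintro ⟨h', hseq, he⟩
  have hrd₂ : Stmt.rd 2 x ∈ h' := he.1.mem_iff.1 (by simp)
  have hrd₁ : Stmt.rd 1 y ∈ h' := he.1.mem_iff.1 (by simp)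
  have hcmt₁ : Stmt.cmt 1 ∈ h' := he.1.mem_iff.1 (by simp)
  have hcmt₂ : Stmt.cmt 2 ∈ h' := he.1.mem_iff.1 (by simp)
  have h₂₁ : h'.idxOf (.rd 2 x) < h'.idxOf (.cmt 1) :=
    he.idxOf_rd_lt_idxOf_cmt (i := 1) (j := 6) (by decide) (by decide) rfl rfl
      (by simp) (by simp) (by simp) (by simp [writes])
  have h₁₂ : h'.idxOf (.rd 1 y) < h'.idxOf (.cmt 2) :=
    he.idxOf_rd_lt_idxOf_cmt (i := 2) (j := 7) (by decide) (by decide) rfl rfl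
      (by simp [Ne.symm hxy]) (by simp) (by simp) (by simp [writes])
  rcases hseq 1 2 (by decide) (occurs_of_mem hcmt₁) (occurs_of_mem hcmt₂) with hprec | hprec
  · exact not_precedes_of_getElem?_of_le (List.getElem?_idxOf hrd₂)
      (List.getElem?_idxOf hcmt₁) h₂₁.le hprec
  · exact not_precedes_of_getElem?_of_le (List.getElem?_idxOf hrd₁)
      (List.getElem?_idxOf hcmt₂) h₁₂.le hprec
end

section
/- For distinct transactions 1, 2 and a variable x, the valued history h3 = [wr_1(x,7), cmt_1, rd_2(x,3), cmt_2] is opaque under the conflict-based definition (i.e., the history obtained from h3 by erasing all values is opaque), but h3 is not value-opaque: every sequential legal history must order transaction 1 before transaction 2 (since 1 <_{h3} 2 and 1 is finished), and then the global read rd_2(x,3) would have to return the value 7 written by the last committed writer of x, not 3. -/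
/-- Statements of the value-based setting: reads and writes carry a value. -/
inductive VStmt : Type where
  | rd (t : ℕ+) (x : ℕ) (v : ℕ)
  | wr (t : ℕ+) (x : ℕ) (v : ℕ)
  | cmt (t : ℕ+)
  | abrt (t : ℕ+)
  deriving DecidableEq

/-- The transaction identifier of a valued statement. -/
def VStmt.txn : VStmt → ℕ+
  | .rd t _ _ => t
  | .wr t _ _ => t
  | .cmt t => t
  | .abrt t => t

/-- Erasing the value from a valued statement. -/
def VStmt.erase : VStmt → Stmt
  | .rd t x _ => Stmt.rd t x
  | .wr t x _ => Stmt.wr t x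
  | .cmt t => Stmt.cmt t
  | .abrt t => Stmt.abrt t

/-- Erasing all values from a valued history. -/
def eraseH (h : List VStmt) : List Stmt := h.map VStmt.erase

/-- Projection of a valued history onto a transaction. -/
def vProj (h : List VStmt) (t : ℕ+) : List VStmt :=
  h.filter (fun s => s.txn = t)

def vOccurs (h : List VStmt) (t : ℕ+) : Prop := vProj h t ≠ []

def vCommitting (h : List VStmt) (t : ℕ+) : Prop :=
  (vProj h t).getLast? = some (VStmt.cmt t)

def vAborting (h : List VStmt) (t : ℕ+) : Prop :=
  (vProj h t).getLast? = some (VStmt.abrt t)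

def vFinished (h : List VStmt) (t : ℕ+) : Prop :=
  vCommitting h t ∨ vAborting h t

def vPrecedes (h : List VStmt) (t1 t2 : ℕ+) : Prop :=
  vOccurs h t1 ∧ vOccurs h t2 ∧
  ∀ (i j : ℕ) (s1 s2 : VStmt), h[i]? = some s1 → h[j]? = some s2 →
    s1.txn = t1 → s2.txn = t2 → i < j

def vSequential (h : List VStmt) : Prop :=
  ∀ t1 t2, t1 ≠ t2 → vOccurs h t1 → vOccurs h t2 →
    vPrecedes h t1 t2 ∨ vPrecedes h t2 t1

/-- Transaction `t` writes to `x` in the valued history `h`. -/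
def vWrites (h : List VStmt) (t : ℕ+) (x : ℕ) : Prop :=
  ∃ v, VStmt.wr t x v ∈ h

/-- The occurrence at position `i` in `h` is a global read `rd_t(x,v)`. -/
def vGlobalRead (h : List VStmt) (i : ℕ) (t : ℕ+) (x : ℕ) (v : ℕ) : Prop :=
  h[i]? = some (VStmt.rd t x v) ∧ ∀ (j : ℕ) (v' : ℕ), j < i → h[j]? ≠ some (VStmt.wr t x v')

/-- The last write of transaction `t` to variable `x` in `h` has value `v`. -/
def lastWrite (h : List VStmt) (t : ℕ+) (x : ℕ) (v : ℕ) : Prop :=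
  ∃ i, h[i]? = some (VStmt.wr t x v) ∧
    ∀ (j : ℕ) (v' : ℕ), i < j → h[j]? ≠ some (VStmt.wr t x v')

/-- `t'` is a `<_h`-maximal committing transaction preceding `t` that writes to `x`. -/
def maxCommittingWriter (h : List VStmt) (t : ℕ+) (x : ℕ) (t' : ℕ+) : Prop :=
  vCommitting h t' ∧ vPrecedes h t' t ∧ vWrites h t' x ∧
  ∀ t'', vCommitting h t'' → vPrecedes h t'' t → vWrites h t'' x →
    t'' = t' ∨ vPrecedes h t'' t'

/-- A sequential valued history is legal: every global read `rd_t(x,v)` returns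
the value of the last write to `x` of the `<_h`-maximal committing transaction
preceding `t` writing to `x`, and `0` if no such transaction exists. -/
def vLegal (h : List VStmt) : Prop :=
  ∀ i t x v, vGlobalRead h i t x v →
    (∀ t', maxCommittingWriter h t x t' → ∀ v', lastWrite h t' x v' → v = v') ∧
    ((¬ ∃ t', vCommitting h t' ∧ vPrecedes h t' t ∧ vWrites h t' x) → v = 0)

/-- Value-equivalence of valued histories. -/
def valueEquiv (h h' : List VStmt) : Prop :=
  (∀ t, vProj h t = vProj h' t) ∧
  (∀ t1 t2, t1 ≠ t2 → vPrecedes h t1 t2 → vFinished h t1 → vPrecedes h' t1 t2)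

/-- A valued history is value-opaque if some sequential legal valued history is
value-equivalent to it. -/
def ValueOpaque (h : List VStmt) : Prop :=
  ∃ h', vSequential h' ∧ vLegal h' ∧ valueEquiv h h'

/-
The erased history is already sequential (transaction 1 runs entirely before transaction 2), and
every history is strictly equivalent to itself, since an occurrence of a statement is determined
by the number of earlier occurrences of the same statement; hence it is opaque. A sequential
legal history value-equivalent to `h3` keeps the finished transaction 1 before transaction 2, so
1 is the maximal committed writer of `x` preceding the global read `rd_2(x,3)`, and its last
write `wr_1(x,7)` would force `3 = 7`.
-/

theorem List.count_take_lt_count_take {α : Type*} [DecidableEq α] {l : List α} {i j : ℕ}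
    {a : α} (hij : i < j) (ha : l[i]? = some a) :
    (l.take i).count a < (l.take j).count a := by
  have hsucc : (l.take (i + 1)).count a = (l.take i).count a + 1 := by
    rw [List.take_add_one, ha, List.count_append]
    simp
  have hle := (List.take_sublist_take_left (l := l) (show i + 1 ≤ j by omega)).count_le a
  omega

theorem List.two_le_count_of_getElem?_eq {α : Type*} [DecidableEq α] {l : List α} {i j : ℕ}
    {a : α} (hij : i < j) (hi : l[i]? = some a) (hj : l[j]? = some a) : 2 ≤ l.count a := by
  have h₁ := List.count_take_lt_count_take hij hi
  have h₂ := List.count_take_lt_count_take (Nat.lt_add_one j) hj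
  have h₃ := (List.take_sublist (j + 1) l).count_le a
  omega

theorem eq_of_corresponds_self {h : List Stmt} {i i' : ℕ} (hc : corresponds h h i i') :
    i = i' := by
  obtain ⟨s, hi, hi', hcount⟩ := hc
  rcases lt_trichotomy i i' with hlt | heq | hgt
  · exact absurd hcount (List.count_take_lt_count_take hlt hi).ne
  · exact heq
  · exact absurd hcount (List.count_take_lt_count_take hgt hi').ne'

theorem strictEquiv_refl (h : List Stmt) : strictEquiv h h :=
  ⟨List.Perm.refl h, fun _ => rfl, fun _ _ _ hp _ => hp, fun _ _ _ _ hij _ hi hj =>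
    eq_of_corresponds_self hi ▸ eq_of_corresponds_self hj ▸ hij⟩

theorem isOpaque_of_sequential {h : List Stmt} (hs : sequential h) : IsOpaque h :=
  ⟨h, hs, strictEquiv_refl h⟩

theorem occurs_iff {h : List Stmt} {t : ℕ+} : occurs h t ↔ ∃ s ∈ h, s.txn = t := by
  simp [occurs, proj, List.filter_eq_nil_iff]

theorem precedes_append {l₁ l₂ : List Stmt} {t₁ t₂ : ℕ+} (h₁ : occurs l₁ t₁)
    (h₂ : occurs l₂ t₂) (hl₁ : ∀ s ∈ l₁, s.txn ≠ t₂) (hl₂ : ∀ s ∈ l₂, s.txn ≠ t₁) :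
    precedes (l₁ ++ l₂) t₁ t₂ := by
  refine ⟨?_, ?_, fun i j s₁ s₂ hi hj hs₁ hs₂ => ?_⟩
  · obtain ⟨s, hs, rfl⟩ := occurs_iff.mp h₁
    exact occurs_iff.mpr ⟨s, List.mem_append_left _ hs, rfl⟩
  · obtain ⟨s, hs, rfl⟩ := occurs_iff.mp h₂
    exact occurs_iff.mpr ⟨s, List.mem_append_right _ hs, rfl⟩
  have hi₁ : i < l₁.length := by
    by_contra hle
    rw [List.getElem?_append_right (not_lt.mp hle)] at hi
    exact hl₂ s₁ (List.mem_of_getElem? hi) hs₁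
  have hj₁ : l₁.length ≤ j := by
    by_contra hlt
    rw [List.getElem?_append_left (not_le.mp hlt)] at hj
    exact hl₁ s₂ (List.mem_of_getElem? hj) hs₂
  omega

theorem sequential_append {l₁ l₂ : List Stmt} {t₁ t₂ : ℕ+} (hl₁ : ∀ s ∈ l₁, s.txn = t₁)
    (hl₂ : ∀ s ∈ l₂, s.txn = t₂) : sequential (l₁ ++ l₂) := by
  have hblock : ∀ t, occurs (l₁ ++ l₂) t → (t = t₁ ∧ occurs l₁ t) ∨ (t = t₂ ∧ occurs l₂ t) := by
    intro t ht
    obtain ⟨s, hs, rfl⟩ := occurs_iff.mp ht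
    rcases List.mem_append.mp hs with hs | hs
    · exact Or.inl ⟨hl₁ s hs, occurs_iff.mpr ⟨s, hs, rfl⟩⟩
    · exact Or.inr ⟨hl₂ s hs, occurs_iff.mpr ⟨s, hs, rfl⟩⟩
  intro t t' hne ht ht'
  rcases hblock t ht with ⟨rfl, ho⟩ | ⟨rfl, ho⟩ <;>
    rcases hblock t' ht' with ⟨rfl, ho'⟩ | ⟨rfl, ho'⟩
  · exact absurd rfl hne
  · exact Or.inl (precedes_append ho ho' (fun s hs => hl₁ s hs ▸ hne)
      (fun s hs => hl₂ s hs ▸ hne.symm))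
  · exact Or.inr (precedes_append ho' ho (fun s hs => hl₁ s hs ▸ hne.symm)
      (fun s hs => hl₂ s hs ▸ hne))
  · exact absurd rfl hne

theorem VStmt.txn_erase (s : VStmt) : s.erase.txn = s.txn := by
  cases s <;> rfl

theorem proj_eraseH (h : List VStmt) (t : ℕ+) :
    proj (eraseH h) t = (vProj h t).map VStmt.erase := by
  simp [proj, vProj, eraseH, List.filter_map, Function.comp_def, VStmt.txn_erase]

theorem vPrecedes_of_precedes_eraseH {h : List VStmt} {t₁ t₂ : ℕ+}
    (hp : precedes (eraseH h) t₁ t₂) : vPrecedes h t₁ t₂ := by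
  obtain ⟨h₁, h₂, horder⟩ := hp
  refine ⟨?_, ?_, fun i j s₁ s₂ hi hj hs₁ hs₂ => ?_⟩
  · simpa [occurs, vOccurs, proj_eraseH] using h₁
  · simpa [occurs, vOccurs, proj_eraseH] using h₂
  refine horder i j s₁.erase s₂.erase ?_ ?_ (by rw [VStmt.txn_erase, hs₁])
    (by rw [VStmt.txn_erase, hs₂])
  · simp [eraseH, hi]
  · simp [eraseH, hj]

theorem count_vProj_txn (h : List VStmt) (s : VStmt) : (vProj h s.txn).count s = h.count s :=
  List.count_filter (by simp)

section vProjEq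

variable {h h' : List VStmt}

theorem count_eq_of_vProj_eq (hp : ∀ t, vProj h t = vProj h' t) (s : VStmt) :
    h.count s = h'.count s := by
  rw [← count_vProj_txn h, hp, count_vProj_txn]

theorem mem_iff_of_vProj_eq (hp : ∀ t, vProj h t = vProj h' t) (s : VStmt) :
    s ∈ h ↔ s ∈ h' := by
  rw [← List.count_pos_iff, ← List.count_pos_iff, count_eq_of_vProj_eq hp]

theorem vWrites_iff_of_vProj_eq (hp : ∀ t, vProj h t = vProj h' t) (t : ℕ+) (x : ℕ) :
    vWrites h t x ↔ vWrites h' t x := by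
  simp only [vWrites, mem_iff_of_vProj_eq hp]

end vProjEq

theorem vGlobalRead_of_not_vWrites {h : List VStmt} {i : ℕ} {t : ℕ+} {x v : ℕ}
    (hi : h[i]? = some (VStmt.rd t x v)) (hw : ¬ vWrites h t x) : vGlobalRead h i t x v :=
  ⟨hi, fun _ v' _ hj => hw ⟨v', List.mem_of_getElem? hj⟩⟩

theorem lastWrite_of_count_eq_one {h : List VStmt} {t : ℕ+} {x v : ℕ}
    (hv : ∀ v', VStmt.wr t x v' ∈ h → v' = v) (hc : h.count (VStmt.wr t x v) = 1) :
    lastWrite h t x v := by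
  obtain ⟨i, hi⟩ := List.mem_iff_getElem?.mp (List.count_pos_iff.mp (hc ▸ Nat.one_pos))
  refine ⟨i, hi, fun j v' hij hj => ?_⟩
  obtain rfl := hv v' (List.mem_of_getElem? hj)
  have := List.two_le_count_of_getElem?_eq hij hi hj
  omega

theorem maxCommittingWriter_of_unique_writer {h : List VStmt} {t t' : ℕ+} {x : ℕ}
    (hc : vCommitting h t') (hp : vPrecedes h t' t) (hw : vWrites h t' x)
    (huniq : ∀ t'', vWrites h t'' x → t'' = t') : maxCommittingWriter h t x t' :=
  ⟨hc, hp, hw, fun t'' _ _ hw'' => Or.inl (huniq t'' hw'')⟩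

def h3 (x : ℕ) : List VStmt := [VStmt.wr 1 x 7, VStmt.cmt 1, VStmt.rd 2 x 3, VStmt.cmt 2]

theorem eraseH_h3 (x : ℕ) :
    eraseH (h3 x) = [Stmt.wr 1 x, Stmt.cmt 1] ++ [Stmt.rd 2 x, Stmt.cmt 2] := rfl

theorem sequential_eraseH_h3 (x : ℕ) : sequential (eraseH (h3 x)) := by
  rw [eraseH_h3]
  exact sequential_append (t₁ := 1) (t₂ := 2) (by simp [Stmt.txn]) (by simp [Stmt.txn])

theorem vPrecedes_h3 (x : ℕ) : vPrecedes (h3 x) 1 2 := by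
  apply vPrecedes_of_precedes_eraseH
  rw [eraseH_h3]
  exact precedes_append (occurs_iff.mpr ⟨_, List.mem_cons_self, rfl⟩)
    (occurs_iff.mpr ⟨_, List.mem_cons_self, rfl⟩) (by simp [Stmt.txn]) (by simp [Stmt.txn])

theorem vCommitting_h3_one (x : ℕ) : vCommitting (h3 x) 1 := by
  simp [vCommitting, vProj, h3, VStmt.txn]

theorem vPrecedes_one_two_of_valueEquiv_h3 {x : ℕ} {h' : List VStmt}
    (hveq : valueEquiv (h3 x) h') : vPrecedes h' 1 2 :=
  hveq.2 1 2 (by decide) (vPrecedes_h3 x) (Or.inl (vCommitting_h3_one x))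

theorem not_valueOpaque_h3 (x : ℕ) : ¬ ValueOpaque (h3 x) := by
  rintro ⟨h', -, hlegal, hveq⟩
  have hmem := mem_iff_of_vProj_eq hveq.1
  have hwrites := vWrites_iff_of_vProj_eq hveq.1
  obtain ⟨i, hi⟩ := List.mem_iff_getElem?.mp ((hmem (VStmt.rd 2 x 3)).mp (by simp [h3]))
  have hread : vGlobalRead h' i 2 x 3 :=
    vGlobalRead_of_not_vWrites hi (by rw [← hwrites]; simp [vWrites, h3])
  have hwriter : maxCommittingWriter h' 2 x 1 :=
    maxCommittingWriter_of_unique_writer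
      (by rw [vCommitting, ← hveq.1]; exact vCommitting_h3_one x)
      (vPrecedes_one_two_of_valueEquiv_h3 hveq) ((hwrites 1 x).mp ⟨7, by simp [h3]⟩)
      (fun t ht => by simpa [vWrites, h3] using (hwrites t x).mpr ht)
  have hlast : lastWrite h' 1 x 7 :=
    lastWrite_of_count_eq_one (fun v hv => by simpa [h3] using (hmem _).mpr hv)
      (by rw [← count_eq_of_vProj_eq hveq.1]; simp [h3])
  exact absurd ((hlegal i 2 x 3 hread).1 1 hwriter 7 hlast) (by norm_num)

/-- The valued history `h3 = [wr_1(x,7), cmt_1, rd_2(x,3), cmt_2]` is opaque under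
the conflict-based definition (after erasing values) but not value-opaque; indeed
every sequential valued history value-equivalent to `h3` must order transaction 1
before transaction 2. -/
theorem h3_conflict_opaque_not_value_opaque (x : ℕ) :
    let h3 : List VStmt := [VStmt.wr 1 x 7, VStmt.cmt 1, VStmt.rd 2 x 3, VStmt.cmt 2]
    IsOpaque (eraseH h3) ∧ ¬ ValueOpaque h3 ∧
    (∀ h', vSequential h' → vLegal h' → valueEquiv h3 h' → vPrecedes h' 1 2) :=
  ⟨isOpaque_of_sequential (sequential_eraseH_h3 x), not_valueOpaque_h3 x,
    fun _ _ _ => vPrecedes_one_two_of_valueEquiv_h3⟩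
end
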